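/- arXiv:1711.10196 — 3 statements merged into one kernel-verified Lean document; each statement's English description precedes it below -/
import Mathlib

section
/- Let l ∈ ℕ, α > 0 and (Σ_n)_n ∈ CovMat(α). Let δ_1,…,δ_l ∈ ℕ with δ_1+⋯+δ_l even, fix n ∈ ℕ with l ≤ Δ_n, and pick integers i(1),…,i(δ_1+⋯+δ_l) ∈ {1,…,Δ_n} such that i(1) = ⋯ = i(δ_1), i(δ_1+1) = ⋯ = i(δ_1+δ_2), …, i(δ_1+⋯+δ_{l−1}+1) = ⋯ = i(δ_1+⋯+δ_l), while i(1), i(δ_1+1), …, i(δ_1+⋯+δ_{l−1}+1) are pairwise distinct. Then |∑_{π∈𝒫𝒫(δ_1+⋯+δ_l)} ∏_{{r,s}∈π} Σ_{Δ_n}(i(r),i(s))| ≤ #𝒫𝒫(δ_1+⋯+δ_l) / (n/√2)^{α·#{i : δ_i = 1}}. -/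
open MeasureTheory ProbabilityTheory Filter Finset
open scoped BigOperators ENNReal NNReal Classical

noncomputable section

namespace RMT

variable {Ω : Type} [MeasurableSpace Ω]

/-- A triangular scheme: for each `n`, a symmetric `n × n` matrix of (measurable) real-valued
random variables, with entries indexed by `{1, …, n}²`. -/
def IsTriangularScheme (a : ℕ → ℕ → ℕ → Ω → ℝ) : Prop :=
  ∀ n p q, p ∈ Finset.Icc 1 n → q ∈ Finset.Icc 1 n →
    a n p q = a n q p ∧ Measurable (a n p q)

/-- Condition (AAU1): distinct decay and boundedness, with constants `C k` and decay
parameter `α`.  The pairs `pq i` range over `{1,…,N}²`, are pairwise fundamentally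
different (i.e. distinct as unordered pairs), and `δ i ≥ 1` are the multiplicities. -/
def AAU1 (P : Measure Ω) (a : ℕ → ℕ → ℕ → Ω → ℝ) (α : ℝ) (C : ℕ → ℝ) : Prop :=
  ∀ (N l : ℕ) (pq : Fin l → ℕ × ℕ),
    (∀ i, (pq i).1 ∈ Finset.Icc 1 N ∧ (pq i).2 ∈ Finset.Icc 1 N) →
    (∀ i j, i ≠ j → s((pq i).1, (pq i).2) ≠ s((pq j).1, (pq j).2)) →
    ∀ n, N ≤ n → ∀ δ : Fin l → ℕ, (∀ i, 1 ≤ δ i) →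
      |∫ ω, ∏ i, a n (pq i).1 (pq i).2 ω ^ δ i ∂P| ≤
        C (∑ i, δ i) / (n : ℝ) ^ (α * ((Finset.univ.filter fun i => δ i = 1).card : ℝ))

/-- Condition (AAU2): second moment condition with constants `C' l n`. -/
def AAU2 (P : Measure Ω) (a : ℕ → ℕ → ℕ → Ω → ℝ) (C' : ℕ → ℕ → ℝ) : Prop :=
  ∀ (N l : ℕ) (pq : Fin l → ℕ × ℕ),
    (∀ i, (pq i).1 ∈ Finset.Icc 1 N ∧ (pq i).2 ∈ Finset.Icc 1 N) →
    (∀ i j, i ≠ j → s((pq i).1, (pq i).2) ≠ s((pq j).1, (pq j).2)) →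
    ∀ n, N ≤ n →
      |(∫ ω, ∏ i, a n (pq i).1 (pq i).2 ω ^ 2 ∂P) - 1| ≤ C' l n

/-- Condition (AAU3): fourth moment condition with constants `D l n`. -/
def AAU3 (P : Measure Ω) (a : ℕ → ℕ → ℕ → Ω → ℝ) (D : ℕ → ℕ → ℝ) : Prop :=
  ∀ (N l : ℕ) (hl : 0 < l) (pq : Fin l → ℕ × ℕ),
    (∀ i, (pq i).1 ∈ Finset.Icc 1 N ∧ (pq i).2 ∈ Finset.Icc 1 N) →
    (∀ i j, i ≠ j → s((pq i).1, (pq i).2) ≠ s((pq j).1, (pq j).2)) →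
    ∀ n, N ≤ n →
      |∫ ω, a n (pq ⟨0, hl⟩).1 (pq ⟨0, hl⟩).2 ω ^ 4 *
          ((∏ i ∈ Finset.univ.erase ⟨0, hl⟩, a n (pq i).1 (pq i).2 ω ^ 2) - 1) ∂P| ≤ D l n

/-- `α`-almost uncorrelated triangular scheme. -/
def AlmostUncorrelated (P : Measure Ω) (a : ℕ → ℕ → ℕ → Ω → ℝ) (α : ℝ) : Prop :=
  ∃ (C : ℕ → ℝ) (C' : ℕ → ℕ → ℝ),
    (∀ m, Tendsto (fun n => C' m n) atTop (nhds 0)) ∧ AAU1 P a α C ∧ AAU2 P a C'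

/-- Strongly `α`-almost uncorrelated triangular scheme. -/
def StronglyAlmostUncorrelated (P : Measure Ω) (a : ℕ → ℕ → ℕ → Ω → ℝ) (α : ℝ) : Prop :=
  ∃ (C : ℕ → ℝ) (C' D : ℕ → ℕ → ℝ),
    (∀ m, Tendsto (fun n => C' m n) atTop (nhds 0)) ∧
    (∀ m, Tendsto (fun n => D m n) atTop (nhds 0)) ∧
    AAU1 P a α C ∧ AAU2 P a C' ∧ AAU3 P a D

/-- Approximately uncorrelated triangular scheme (Hochstättler–Kirsch–Warzel). -/
def ApproxUncorrelated (P : Measure Ω) (a : ℕ → ℕ → ℕ → Ω → ℝ) : Prop :=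
  ∃ (K : ℕ → ℕ → ℝ) (K' : ℕ → ℕ → ℝ),
    (∀ s m, 0 ≤ K s m) ∧ (∀ s n, 0 ≤ K' s n) ∧
    (∀ s, Tendsto (fun n => K' s n) atTop (nhds 0)) ∧
    ∀ (N s m : ℕ) (pq : Fin (s + m) → ℕ × ℕ),
      (∀ i, (pq i).1 ∈ Finset.Icc 1 N ∧ (pq i).2 ∈ Finset.Icc 1 N) →
      (∀ i j : Fin (s + m), (i : ℕ) < s → i ≠ j →
        s((pq i).1, (pq i).2) ≠ s((pq j).1, (pq j).2)) →
      ∀ n, N ≤ n →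
        |∫ ω, ∏ i, a n (pq i).1 (pq i).2 ω ∂P| ≤ K s m / (n : ℝ) ^ ((s : ℝ) / 2) ∧
        |(∫ ω, ∏ i ∈ Finset.univ.filter (fun i : Fin (s + m) => (i : ℕ) < s),
            a n (pq i).1 (pq i).2 ω ^ 2 ∂P) - 1| ≤ K' s n

/-- A Wigner scheme: independent entries (up to symmetry), centered, unit variance,
with uniformly bounded moments of all orders. -/
def IsWignerScheme (P : Measure Ω) (a : ℕ → ℕ → ℕ → Ω → ℝ) : Prop :=
  IsTriangularScheme a ∧
  (∀ n : ℕ, iIndepFun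
      (fun ij : {p : ℕ × ℕ // 1 ≤ p.1 ∧ p.1 ≤ p.2 ∧ p.2 ≤ n} => a n ij.1.1 ij.1.2) P) ∧
  (∀ n, ∀ p ∈ Finset.Icc 1 n, ∀ q ∈ Finset.Icc 1 n,
      (∫ ω, a n p q ω ∂P) = 0 ∧ (∫ ω, a n p q ω ^ 2 ∂P) = 1) ∧
  (∀ k : ℕ, ∃ Cp : ℝ, ∀ n, ∀ p ∈ Finset.Icc 1 n, ∀ q ∈ Finset.Icc 1 n,
      (∫ ω, |a n p q ω| ^ k ∂P) ≤ Cp)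

/-- `b` is an `n`-bandwidth: an odd number `< n`, or `n` itself. -/
def IsBandwidth (n b : ℕ) : Prop := (b < n ∧ Odd b) ∨ b = n

/-- The pair `(i,j) ∈ {1,…,n}²` is `bn`-relevant. -/
def BRelevant (n bn i j : ℕ) : Prop :=
  bn = n ∨ |(i : ℤ) - (j : ℤ)| ≤ ((bn - 1) / 2 : ℕ) ∨
    (n : ℤ) - ((bn - 1) / 2 : ℕ) ≤ |(i : ℤ) - (j : ℤ)|

/-- The periodic random band matrix of dimension `n × n` based on the scheme `a` with
bandwidths `b` : entries `X_n(p,q) = b_n^{-1/2} a_n(p,q)` for `b_n`-relevant `(p,q)`, else `0`. -/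
def bandMatrix (a : ℕ → ℕ → ℕ → Ω → ℝ) (b : ℕ → ℕ) (n : ℕ) (ω : Ω) :
    Matrix (Fin n) (Fin n) ℝ := fun i j =>
  if BRelevant n (b n) (i.1 + 1) (j.1 + 1)
  then (Real.sqrt (b n))⁻¹ * a n (i.1 + 1) (j.1 + 1) ω else 0

/-- The empirical spectral distribution of a real symmetric matrix
(junk value `0` if the matrix is not symmetric). -/
def ESD {n : ℕ} (M : Matrix (Fin n) (Fin n) ℝ) : Measure ℝ :=
  if h : M.IsHermitian then
    ((n : ℝ≥0∞))⁻¹ • ∑ i : Fin n, Measure.dirac (h.eigenvalues i)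
  else 0

/-- The semicircle distribution, with Lebesgue density
`(2π)⁻¹ √(4 - x²) 1_{[-2,2]}(x)`. -/
def semicircle : Measure ℝ :=
  volume.withDensity fun x =>
    ENNReal.ofReal (if -2 ≤ x ∧ x ≤ 2 then (2 * Real.pi)⁻¹ * Real.sqrt (4 - x ^ 2) else 0)

/-- The semicircle law holds in probability for the random matrices `X n`. -/
def SemicircleLawInProbability (P : Measure Ω)
    (X : (n : ℕ) → Ω → Matrix (Fin n) (Fin n) ℝ) : Prop :=
  ∀ f : BoundedContinuousFunction ℝ ℝ,
    TendstoInMeasure P (fun n ω => ∫ x, f x ∂ ESD (X n ω)) atTop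
      (fun _ => ∫ x, f x ∂ semicircle)

/-- The semicircle law holds almost surely for the random matrices `X n`. -/
def SemicircleLawAS (P : Measure Ω)
    (X : (n : ℕ) → Ω → Matrix (Fin n) (Fin n) ℝ) : Prop :=
  ∀ f : BoundedContinuousFunction ℝ ℝ,
    ∀ᵐ ω ∂P, Tendsto (fun n => ∫ x, f x ∂ ESD (X n ω)) atTop
      (nhds (∫ x, f x ∂ semicircle))

/-- The family `Y` is Curie-Weiss(`β`, `card ι`)-distributed. -/
def IsCurieWeiss {ι : Type} [Fintype ι] (P : Measure Ω) (β : ℝ) (Y : ι → Ω → ℝ) : Prop :=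
  (∀ i, Measurable (Y i)) ∧
  (∀ᵐ ω ∂P, ∀ i, Y i ω = 1 ∨ Y i ω = -1) ∧
  ∃ Z : ℝ, 0 < Z ∧ ∀ y : ι → ℝ, (∀ i, y i = 1 ∨ y i = -1) →
    P {ω | ∀ i, Y i ω = y i} =
      ENNReal.ofReal (Z⁻¹ * Real.exp (β / (2 * Fintype.card ι) * (∑ i, y i) ^ 2))

/-- `Δ n = n (n+1) / 2`. -/
def Δn (n : ℕ) : ℕ := n * (n + 1) / 2

/-- Pair partitions of `{1, …, k}`, encoded as fixed-point-free involutions of `Fin k`. -/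
def PairPartitions (k : ℕ) : Finset (Equiv.Perm (Fin k)) :=
  Finset.univ.filter fun π => ∀ r, π (π r) = r ∧ π r ≠ r

/-- The product `∏_{{r,s} ∈ π} S (i r) (i s)` over the blocks of a pair partition `π`. -/
def pairProd {k m : ℕ} (S : Matrix (Fin m) (Fin m) ℝ) (i : Fin k → Fin m)
    (π : Equiv.Perm (Fin k)) : ℝ :=
  ∏ r ∈ Finset.univ.filter (fun r => r < π r), S (i r) (i (π r))

/-- `(Σ_n)_n ∈ CovMat(α)`: symmetric positive definite, unit diagonal, off-diagonal
entries bounded by `n^{-α}`. -/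
def CovMatSeq (α : ℝ) (S : ∀ n : ℕ, Matrix (Fin n) (Fin n) ℝ) : Prop :=
  ∀ n, (S n).IsSymm ∧ (S n).PosDef ∧ (∀ i, S n i i = 1) ∧
    ∀ i j : Fin n, i ≠ j → |S n i j| ≤ 1 / (n : ℝ) ^ α

/-- Position `r` (0-based) lies in the `j`-th block of sizes `δ 0, δ 1, …`. -/
def inBlock {l : ℕ} (δ : Fin l → ℕ) (j : Fin l) (r : ℕ) : Prop :=
  (∑ j' ∈ Finset.univ.filter (· < j), δ j') ≤ r ∧
    r < ∑ j' ∈ Finset.univ.filter (· ≤ j), δ j'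

/-- The family `Y` is a centered Gaussian family with covariance matrix `S`:
every linear combination is a centered real Gaussian with the corresponding variance. -/
def IsCenteredGaussianFamily (P : Measure Ω) {m : ℕ}
    (Y : Fin m → Ω → ℝ) (S : Matrix (Fin m) (Fin m) ℝ) : Prop :=
  (∀ i, Measurable (Y i)) ∧
  ∀ c : Fin m → ℝ,
    Measure.map (fun ω => ∑ i, c i * Y i ω) P =
      gaussianReal 0 (Real.toNNReal (∑ i, ∑ j, c i * S i j * c j))

/-- The Gaussian triangular scheme `a` constructed from a covariance sequence `S`
via a filling bijection `φ` (with values in `{1,…,Δ_n}`) and Gaussian vectors `Y`. -/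
def GaussianScheme (P : Measure Ω) (S : ∀ m, Matrix (Fin m) (Fin m) ℝ)
    (φ : ℕ → ℕ → ℕ → ℕ) (Y : ℕ → ℕ → Ω → ℝ) (a : ℕ → ℕ → ℕ → Ω → ℝ) : Prop :=
  (∀ n, Set.BijOn (fun p : ℕ × ℕ => φ n p.1 p.2)
      {p : ℕ × ℕ | 1 ≤ p.1 ∧ p.1 ≤ p.2 ∧ p.2 ≤ n} (Set.Icc 1 (Δn n))) ∧
  (∀ n i j, j < i → φ n i j = φ n j i) ∧
  (∀ n, IsCenteredGaussianFamily P (fun t : Fin (Δn n) => Y n (t.1 + 1)) (S (Δn n))) ∧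
  (∀ n i j, a n i j = Y n (φ n i j))

/-- Cyclic successor on `Fin k`. -/
def cyc {k : ℕ} (i : Fin k) : Fin k :=
  ⟨(i.1 + 1) % k, Nat.mod_lt _ (Nat.lt_of_le_of_lt (Nat.zero_le _) i.isLt)⟩

/-- The multiset of edges of the cyclic multigraph of the tuple `t`. -/
def tupleEdges {k : ℕ} (t : Fin k → ℕ) : Multiset (Sym2 ℕ) :=
  Finset.univ.val.map fun i : Fin k => s(t i, t (cyc i))

/-- `kappa t l` = number of distinct `l`-fold edges of `t`. -/
def kappa {k : ℕ} (t : Fin k → ℕ) (l : ℕ) : ℕ :=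
  ((tupleEdges t).toFinset.filter fun e => (tupleEdges t).count e = l).card

/-- Number of distinct loops of `t`. -/
def numLoops {k : ℕ} (t : Fin k → ℕ) : ℕ :=
  ((tupleEdges t).toFinset.filter fun e => e.IsDiag).card

/-- `t` has at least one odd edge. -/
def hasOddEdge {k : ℕ} (t : Fin k → ℕ) : Prop :=
  ∃ e ∈ (tupleEdges t).toFinset, Odd ((tupleEdges t).count e)

/-- `t` has only even edges. -/
def hasOnlyEvenEdges {k : ℕ} (t : Fin k → ℕ) : Prop :=
  ∀ e ∈ (tupleEdges t).toFinset, Even ((tupleEdges t).count e)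

/-- Vertex set of the tuple `t`. -/
def verts {k : ℕ} (t : Fin k → ℕ) : Finset ℕ := Finset.image t Finset.univ

/-- The set of `bn`-relevant `k`-tuples with entries in `{1,…,n}`. -/
def relTuples (n bn k : ℕ) : Finset (Fin k → ℕ) :=
  (Fintype.piFinset fun _ : Fin k => Finset.Icc 1 n).filter
    fun t => ∀ i : Fin k, BRelevant n bn (t i) (t (cyc i))

/-- `t` and `s` have the same profile `κ`. -/
def sameProfile {k : ℕ} (t s : Fin k → ℕ) : Prop :=
  ∀ l ∈ Finset.Icc 1 k, kappa t l = kappa s l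

/-- Equivalence class `𝒯(s)` of `s` in `[n]^k_b`. -/
def Tclass (n bn k : ℕ) (s : Fin k → ℕ) : Finset (Fin k → ℕ) :=
  (relTuples n bn k).filter fun t => sameProfile t s

/-- `𝒯^c(s,s')`: pairs of tuples with prescribed profiles having a common edge. -/
def Tcommon (n bn k : ℕ) (s s' : Fin k → ℕ) : Finset ((Fin k → ℕ) × (Fin k → ℕ)) :=
  ((relTuples n bn k) ×ˢ (relTuples n bn k)).filter fun tt =>
    sameProfile tt.1 s ∧ sameProfile tt.2 s' ∧
      ((tupleEdges tt.1).toFinset ∩ (tupleEdges tt.2).toFinset).Nonempty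

/-- `𝒯^c_l(s,s')`: pairs in `𝒯^c(s,s')` with exactly `l` common edges. -/
def TcommonL (n bn k : ℕ) (s s' : Fin k → ℕ) (l : ℕ) :
    Finset ((Fin k → ℕ) × (Fin k → ℕ)) :=
  (Tcommon n bn k s s').filter fun tt =>
    ((tupleEdges tt.1).toFinset ∩ (tupleEdges tt.2).toFinset).card = l

/-
Each Wick term is bounded separately. All entries of `Σ` have modulus at most `1` and the
off-diagonal ones at most `ε = Δₙ^(-α)`, so a pairing `π` contributes at most `ε ^ F`, where `F`
counts the blocks `{r, s}` of `π` with `i r ≠ i s`. The position of a block of size one carries an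
index occurring nowhere else, so it is paired across; as a block of `π` holds at most two such
positions, `m := #{j | δ j = 1} ≤ 2 F`. Hence every term is at most `√ε ^ m`, and
`√ε ≤ (n / √2)^(-α)` because `Δₙ ≥ n² / 2`.
-/

lemma sum_filter_le_eq_add_sum_filter_lt {l : ℕ} (δ : Fin l → ℕ) (j : Fin l) :
    ∑ j' ∈ univ.filter (· ≤ j), δ j' = δ j + ∑ j' ∈ univ.filter (· < j), δ j' := by
  have h : univ.filter (· ≤ j) = insert j (univ.filter (· < j)) := by
    ext x
    simp [le_iff_lt_or_eq, or_comm]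
  rw [h, sum_insert (by simp)]

lemma exists_inBlock {l : ℕ} (δ : Fin l → ℕ) {r : ℕ} (hr : r < ∑ j, δ j) :
    ∃ j, inBlock δ j r := by
  have hl : (univ : Finset (Fin l)).Nonempty := nonempty_of_sum_ne_zero (f := δ) (by omega)
  set T := univ.filter fun j : Fin l => r < ∑ j' ∈ univ.filter (· ≤ j), δ j'
  have hT : T.Nonempty := by
    refine ⟨univ.max' hl, mem_filter.mpr ⟨mem_univ _, ?_⟩⟩
    rwa [filter_true_of_mem fun x _ => le_max' _ x (mem_univ x)]
  -- the block of `r` is the first one whose end lies beyond `r`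
  refine ⟨T.min' hT, ?_, (mem_filter.mp (T.min'_mem hT)).2⟩
  by_contra! hlow
  have hprev : (univ.filter (· < T.min' hT)).Nonempty := by
    by_contra h
    rw [not_nonempty_iff_eq_empty] at h
    rw [h, sum_empty] at hlow
    omega
  set j₁ := (univ.filter (· < T.min' hT)).max' hprev
  have hj₁ : j₁ < T.min' hT := (mem_filter.mp (max'_mem _ hprev)).2
  have hsub : univ.filter (· < T.min' hT) ⊆ univ.filter (· ≤ j₁) := fun x hx =>
    mem_filter.mpr ⟨mem_univ x, le_max' _ x hx⟩
  have hj₁T : j₁ ∈ T := mem_filter.mpr ⟨mem_univ _, hlow.trans_le (sum_le_sum_of_subset hsub)⟩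
  exact (T.min'_le _ hj₁T).not_gt hj₁

lemma inBlock_unique {l : ℕ} (δ : Fin l → ℕ) {j j' : Fin l} {r : ℕ}
    (h : inBlock δ j r) (h' : inBlock δ j' r) : j = j' := by
  have hend_le_start : ∀ a b : Fin l, a < b →
      ∑ x ∈ univ.filter (· ≤ a), δ x ≤ ∑ x ∈ univ.filter (· < b), δ x := fun a b hab =>
    sum_le_sum_of_subset fun x hx => mem_filter.mpr ⟨mem_univ x, (mem_filter.mp hx).2.trans_lt hab⟩
  obtain ⟨h1, h2⟩ := h
  obtain ⟨h1', h2'⟩ := h'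
  rcases lt_trichotomy j j' with hlt | heq | hlt
  · have := hend_le_start j j' hlt; omega
  · exact heq
  · have := hend_le_start j' j hlt; omega

lemma inBlock_iff_of_eq_one {l : ℕ} {δ : Fin l → ℕ} {j : Fin l} (hj : δ j = 1) {r : ℕ} :
    inBlock δ j r ↔ r = ∑ j' ∈ univ.filter (· < j), δ j' := by
  rw [inBlock, sum_filter_le_eq_add_sum_filter_lt, hj]
  omega

-- A block of size one is a single position, and its index occurs at no other position.
lemma card_filter_eq_one_le_card_unique {l N : ℕ} (δ : Fin l → ℕ) (i : Fin (∑ j, δ j) → Fin N)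
    (hdist : ∀ (j j' : Fin l), j ≠ j' → ∀ (r r' : Fin (∑ j, δ j)),
      inBlock δ j (r : ℕ) → inBlock δ j' (r' : ℕ) → i r ≠ i r') :
    #(univ.filter fun j => δ j = 1) ≤ #(univ.filter fun r => ∀ s, i s = i r → s = r) := by
  set U := univ.filter fun r : Fin (∑ j, δ j) => ∀ s, i s = i r → s = r
  refine (card_le_card_of_injOn (t := U.map Fin.valEmbedding)
    (fun j : Fin l => ∑ j' ∈ univ.filter (· < j), δ j') ?_ ?_).trans (card_map _).le
  · intro j hj
    have hj1 : δ j = 1 := (mem_filter.mp hj).2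
    have hlt : ∑ j' ∈ univ.filter (· < j), δ j' < ∑ j, δ j := by
      have hend : ∑ j' ∈ univ.filter (· ≤ j), δ j' ≤ ∑ j, δ j :=
        sum_le_sum_of_subset (subset_univ _)
      rw [sum_filter_le_eq_add_sum_filter_lt, hj1] at hend
      omega
    have hblock : inBlock δ j (∑ j' ∈ univ.filter (· < j), δ j') :=
      (inBlock_iff_of_eq_one hj1).mpr rfl
    refine mem_map.mpr ⟨⟨_, hlt⟩, mem_filter.mpr ⟨mem_univ _, fun s hs => ?_⟩, rfl⟩
    obtain ⟨j', hj'⟩ := exists_inBlock δ s.isLt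
    obtain rfl : j = j' := by
      by_contra hne
      exact hdist j j' hne _ s hblock hj' hs.symm
    exact Fin.ext ((inBlock_iff_of_eq_one hj1).mp hj')
  · intro j hj j' hj' h
    exact inBlock_unique δ ((inBlock_iff_of_eq_one (mem_filter.mp hj).2).mpr rfl)
      ((inBlock_iff_of_eq_one (mem_filter.mp hj').2).mpr h)

section PairPartition

variable {k : ℕ} {π : Equiv.Perm (Fin k)}

lemma card_filter_eq_two_mul_card_filter_lt (hπ : π ∈ PairPartitions k) (p : Fin k → Prop)
    [DecidablePred p] (hp : ∀ r, p (π r) ↔ p r) :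
    #(univ.filter p) = 2 * #(univ.filter fun r => r < π r ∧ p r) := by
  have hπ' : ∀ r, π (π r) = r ∧ π r ≠ r := by simpa [PairPartitions] using hπ
  have hsplit : univ.filter p =
      univ.filter (fun r => r < π r ∧ p r) ∪ univ.filter (fun r => π r < r ∧ p r) := by
    ext r
    simp only [mem_filter, mem_univ, true_and, mem_union]
    have := (hπ' r).2
    constructor
    · intro hr
      rcases lt_or_gt_of_ne this with h | h
      · exact Or.inr ⟨h, hr⟩
      · exact Or.inl ⟨h, hr⟩
    · rintro (h | h) <;> exact h.2
  -- `π` swaps the lower and the upper points of the blocks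
  have hswap : #(univ.filter fun r => π r < r ∧ p r) = #(univ.filter fun r => r < π r ∧ p r) := by
    refine card_nbij' π π ?_ ?_ ?_ ?_ <;> intro r <;> simp [hπ', hp]
  rw [hsplit, card_union_of_disjoint, hswap, two_mul]
  exact disjoint_filter.mpr fun r _ h h' => lt_asymm h.1 h'.1

lemma card_unique_le_two_mul_card_cross {N : ℕ} (hπ : π ∈ PairPartitions k) (i : Fin k → Fin N) :
    #(univ.filter fun r => ∀ s, i s = i r → s = r) ≤
      2 * #(univ.filter fun r => r < π r ∧ i r ≠ i (π r)) := by
  have hπ' : ∀ r, π (π r) = r ∧ π r ≠ r := by simpa [PairPartitions] using hπ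
  rw [← card_filter_eq_two_mul_card_filter_lt hπ fun r => i r ≠ i (π r)]
  · refine card_le_card fun r hr => mem_filter.mpr ⟨mem_univ r, fun h => (hπ' r).2 ?_⟩
    exact (mem_filter.mp hr).2 _ h.symm
  · intro r
    rw [(hπ' r).1, ne_comm]

lemma abs_pairProd_le_pow_card_cross {N : ℕ} (T : Matrix (Fin N) (Fin N) ℝ) {ε : ℝ}
    (hdiag : ∀ x, |T x x| ≤ 1) (hoff : ∀ x y, x ≠ y → |T x y| ≤ ε) (i : Fin k → Fin N)
    (π : Equiv.Perm (Fin k)) :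
    |pairProd T i π| ≤ ε ^ #(univ.filter fun r => r < π r ∧ i r ≠ i (π r)) := by
  rw [pairProd, abs_prod, ← filter_filter, ← prod_const,
    ← prod_filter_mul_prod_filter_not (univ.filter fun r => r < π r) fun r => i r ≠ i (π r)]
  calc _ ≤ (∏ r ∈ (univ.filter fun r => r < π r).filter (fun r => i r ≠ i (π r)), ε) * 1 := by
        refine mul_le_mul (prod_le_prod (fun _ _ => abs_nonneg _) fun r hr => ?_)
          (prod_le_one (fun _ _ => abs_nonneg _) fun r hr => ?_) (by positivity) ?_
        · exact hoff _ _ (mem_filter.mp hr).2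
        · rw [not_not.mp (mem_filter.mp hr).2]
          exact hdiag _
        · exact prod_nonneg fun r hr => (abs_nonneg _).trans (hoff _ _ (mem_filter.mp hr).2)
    _ = _ := mul_one _

lemma abs_pairProd_le_sqrt_pow_card_unique {N : ℕ} (T : Matrix (Fin N) (Fin N) ℝ) {ε : ℝ}
    (hε₀ : 0 ≤ ε) (hε₁ : ε ≤ 1) (hdiag : ∀ x, |T x x| ≤ 1) (hoff : ∀ x y, x ≠ y → |T x y| ≤ ε)
    (i : Fin k → Fin N) (hπ : π ∈ PairPartitions k) :
    |pairProd T i π| ≤ √ε ^ #(univ.filter fun r => ∀ s, i s = i r → s = r) :=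
  calc |pairProd T i π| ≤ ε ^ #(univ.filter fun r => r < π r ∧ i r ≠ i (π r)) :=
        abs_pairProd_le_pow_card_cross T hdiag hoff i π
    _ = √ε ^ (2 * #(univ.filter fun r => r < π r ∧ i r ≠ i (π r))) := by
        rw [pow_mul, Real.sq_sqrt hε₀]
    _ ≤ _ := pow_le_pow_of_le_one (Real.sqrt_nonneg _) (Real.sqrt_le_one.mpr hε₁)
        (card_unique_le_two_mul_card_cross hπ i)

end PairPartition

lemma two_mul_Δn (n : ℕ) : 2 * Δn n = n * (n + 1) :=
  Nat.mul_div_cancel' (even_iff_two_dvd.mp (Nat.even_mul_succ_self n))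

lemma one_div_natCast_rpow_le_one {α : ℝ} (hα : 0 < α) (N : ℕ) : 1 / (N : ℝ) ^ α ≤ 1 := by
  rcases N.eq_zero_or_pos with rfl | hN
  · simp [Real.zero_rpow hα.ne']
  · exact div_le_one_of_le₀ (Real.one_le_rpow (by exact_mod_cast hN) hα.le) (by positivity)

lemma sqrt_one_div_rpow_Δn_le {α : ℝ} (hα : 0 < α) (n : ℕ) :
    √(1 / (Δn n : ℝ) ^ α) ≤ 1 / ((n : ℝ) / √2) ^ α := by
  rcases n.eq_zero_or_pos with rfl | hn
  · simp [Δn, Real.zero_rpow hα.ne']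
  have hbase : 0 < (n : ℝ) / √2 := by positivity
  have hsq : (n : ℝ) / √2 * ((n : ℝ) / √2) ≤ Δn n := by
    have h2 : (2 * Δn n : ℝ) = n * (n + 1) := by exact_mod_cast two_mul_Δn n
    rw [div_mul_div_comm, Real.mul_self_sqrt zero_le_two]
    nlinarith
  rw [Real.sqrt_le_left (by positivity), div_pow, one_pow, sq, ← Real.mul_rpow hbase.le hbase.le]
  exact one_div_le_one_div_of_le (by positivity) (Real.rpow_le_rpow (by positivity) hsq hα.le)

theorem stmt9_general (α : ℝ) (hα : 0 < α) (S : ∀ n, Matrix (Fin n) (Fin n) ℝ)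
    (hS : CovMatSeq α S)
    (l : ℕ) (δ : Fin l → ℕ)
    (n : ℕ)
    (i : Fin (∑ j, δ j) → Fin (Δn n))
    (hdist : ∀ (j j' : Fin l), j ≠ j' → ∀ (r r' : Fin (∑ j, δ j)),
      inBlock δ j (r : ℕ) → inBlock δ j' (r' : ℕ) → i r ≠ i r') :
    |∑ π ∈ PairPartitions (∑ j, δ j), pairProd (S (Δn n)) i π| ≤
      ((PairPartitions (∑ j, δ j)).card : ℝ) /
        ((n : ℝ) / Real.sqrt 2) ^ (α * ((Finset.univ.filter fun j => δ j = 1).card : ℝ)) := by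
  obtain ⟨-, -, hdiag, hoff⟩ := hS (Δn n)
  set ε : ℝ := 1 / (Δn n : ℝ) ^ α
  have hε₁ : ε ≤ 1 := one_div_natCast_rpow_le_one hα _
  set m := #(univ.filter fun j => δ j = 1)
  have hpair : ∀ π ∈ PairPartitions (∑ j, δ j),
      |pairProd (S (Δn n)) i π| ≤ 1 / ((n : ℝ) / √2) ^ (α * (m : ℝ)) := by
    intro π hπ
    calc |pairProd (S (Δn n)) i π|
        ≤ √ε ^ #(univ.filter fun r => ∀ s, i s = i r → s = r) :=
          abs_pairProd_le_sqrt_pow_card_unique _ (by positivity) hε₁ (fun x => by simp [hdiag])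
            hoff i hπ
      _ ≤ √ε ^ m := pow_le_pow_of_le_one (Real.sqrt_nonneg _) (Real.sqrt_le_one.mpr hε₁)
          (card_filter_eq_one_le_card_unique δ i hdist)
      _ ≤ (1 / ((n : ℝ) / √2) ^ α) ^ m :=
          pow_le_pow_left₀ (Real.sqrt_nonneg _) (sqrt_one_div_rpow_Δn_le hα n) _
      _ = 1 / ((n : ℝ) / √2) ^ (α * (m : ℝ)) := by
          rw [Real.rpow_mul_natCast (by positivity), one_div_pow]
  calc _ ≤ ∑ π ∈ PairPartitions (∑ j, δ j), |pairProd (S (Δn n)) i π| := abs_sum_le_sum_abs _ _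
    _ ≤ #(PairPartitions (∑ j, δ j)) • (1 / ((n : ℝ) / √2) ^ (α * (m : ℝ))) :=
        sum_le_card_nsmul _ _ _ hpair
    _ = _ := by rw [nsmul_eq_mul, mul_one_div]

/-- Wick-sum bound for block-constant index tuples. -/
theorem stmt9 (α : ℝ) (hα : 0 < α) (S : ∀ n, Matrix (Fin n) (Fin n) ℝ)
    (hS : CovMatSeq α S)
    (l : ℕ) (hl : 0 < l) (δ : Fin l → ℕ) (hδ : ∀ j, 1 ≤ δ j)
    (heven : Even (∑ j, δ j)) (n : ℕ) (hn : l ≤ Δn n)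
    (i : Fin (∑ j, δ j) → Fin (Δn n))
    (hconst : ∀ (j : Fin l) (r r' : Fin (∑ j, δ j)),
      inBlock δ j (r : ℕ) → inBlock δ j (r' : ℕ) → i r = i r')
    (hdist : ∀ (j j' : Fin l), j ≠ j' → ∀ (r r' : Fin (∑ j, δ j)),
      inBlock δ j (r : ℕ) → inBlock δ j' (r' : ℕ) → i r ≠ i r') :
    |∑ π ∈ PairPartitions (∑ j, δ j), pairProd (S (Δn n)) i π| ≤
      ((PairPartitions (∑ j, δ j)).card : ℝ) /
        ((n : ℝ) / Real.sqrt 2) ^ (α * ((Finset.univ.filter fun j => δ j = 1).card : ℝ)) :=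
  stmt9_general α hα S hS l δ n i hdist

end RMT
end
end

section
/- Let α > 0 and (Σ_n)_n ∈ CovMat(α). Let n, z ∈ ℕ with z ≤ Δ_n. Choose i(1),…,i(2z+2) ∈ {1,…,Δ_n} with i(1) = i(2) = i(3) = i(4), i(5) = i(6), i(7) = i(8), …, i(2z+1) = i(2z+2), and such that i(1), i(5), i(7), …, i(2z+1) are pairwise distinct. Then |∑_{π∈𝒫𝒫(2z+2)} ∏_{{r,s}∈π} Σ_{Δ_n}(i(r),i(s)) − 3| ≤ #𝒫𝒫(2z+2) / (n/√2)^{4α}. -/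
open MeasureTheory ProbabilityTheory Filter Finset
open scoped BigOperators ENNReal NNReal Classical

noncomputable section

namespace RMT

variable {Ω : Type} [MeasurableSpace Ω]

/-! The sum runs over the Wick pairings of the indices. A pairing that only ever pairs equal
indices contributes `1`; these are the three pairings of the four copies of `i(1)` together with
the forced pairings of the doubled indices. Every index value occurs an even number of times, so a
pairing that pairs two different indices must do so in at least two blocks, and its product is
then at most `(Δₙ^{-α})² ≤ (n/√2)^{-4α}` in absolute value. -/

lemma mem_pairPartitions {k : ℕ} {π : Equiv.Perm (Fin k)} :
    π ∈ PairPartitions k ↔ ∀ r, π (π r) = r ∧ π r ≠ r := by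
  simp [PairPartitions]

lemma even_card_of_involution {ι : Type*} {s : Finset ι} (g : ι → ι)
    (hg_mem : ∀ a ∈ s, g a ∈ s) (hg_ne : ∀ a ∈ s, g a ≠ a) (hg_inv : ∀ a ∈ s, g (g a) = a) :
    Even #s := by
  have h : ∑ _a ∈ s, (1 : ZMod 2) = 0 :=
    Finset.sum_involution (fun a _ => g a) (fun _ _ => by decide) (fun a ha _ => hg_ne a ha)
      hg_mem hg_inv
  rw [Finset.sum_const, nsmul_one] at h
  exact ZMod.natCast_eq_zero_iff_even.1 h

section Labelling

variable {ι β : Type*} [Fintype ι] [DecidableEq β] {F : ι → β}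

lemma even_card_fiber_of_involution (τ : ι → ι) (hτ : ∀ r, τ (τ r) = r ∧ τ r ≠ r)
    (hFτ : ∀ r, F (τ r) = F r) (b : β) : Even #{r | F r = b} :=
  even_card_of_involution τ (fun r hr => by simpa [hFτ] using hr) (fun r _ => (hτ r).2)
    (fun r _ => (hτ r).1)

/-- Otherwise `π` would pair off the fibre of `F r` without `r`, making that fibre odd. -/
lemma exists_ne_of_apply_ne [DecidableEq ι] (hF : ∀ b, Even #{r | F r = b})
    {π : Equiv.Perm ι} (hπ : ∀ r, π (π r) = r ∧ π r ≠ r) {r : ι} (hr : F (π r) ≠ F r) :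
    ∃ s, F s = F r ∧ s ≠ r ∧ F (π s) ≠ F s := by
  by_contra! h
  have hr_mem : r ∈ ({s | F s = F r} : Finset ι) := by simp
  have hrest : Even #(({s | F s = F r} : Finset ι).erase r) := by
    refine even_card_of_involution π (fun s hs => ?_) (fun s _ => (hπ s).2) (fun s _ => (hπ s).1)
    simp only [Finset.mem_erase, Finset.mem_filter, Finset.mem_univ, true_and] at hs ⊢
    have hπs := h s hs.2 hs.1
    refine ⟨fun hsr => hr ?_, hπs.trans hs.2⟩
    rw [← hsr, (hπ s).1, hπs, hs.2]
  have hfiber := hF (F r)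
  rw [← Finset.card_erase_add_one hr_mem] at hfiber
  exact Nat.not_even_iff_odd.2 hrest.add_one hfiber

end Labelling

lemma abs_prod_le_sq {ι : Type*} [DecidableEq ι] {T : Finset ι} {x : ι → ℝ} {ε : ℝ}
    (hx : ∀ t ∈ T, |x t| ≤ 1) {t₁ t₂ : ι} (h₁ : t₁ ∈ T) (h₂ : t₂ ∈ T) (hne : t₁ ≠ t₂)
    (hε₁ : |x t₁| ≤ ε) (hε₂ : |x t₂| ≤ ε) : |∏ t ∈ T, x t| ≤ ε ^ 2 := by
  have hε : 0 ≤ ε := (abs_nonneg _).trans hε₁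
  have h₂' : t₂ ∈ T.erase t₁ := Finset.mem_erase.2 ⟨hne.symm, h₂⟩
  have hrest : ∏ t ∈ (T.erase t₁).erase t₂, |x t| ≤ 1 :=
    Finset.prod_le_one (fun _ _ => abs_nonneg _)
      (fun t ht => hx t (Finset.mem_of_mem_erase (Finset.mem_of_mem_erase ht)))
  rw [Finset.abs_prod, ← Finset.mul_prod_erase _ _ h₁, ← Finset.mul_prod_erase _ _ h₂']
  calc |x t₁| * (|x t₂| * ∏ t ∈ (T.erase t₁).erase t₂, |x t|) ≤ ε * (ε * 1) := by gcongr
    _ = ε ^ 2 := by ring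

section WickProduct

variable {k m : ℕ} {S : Matrix (Fin m) (Fin m) ℝ} {F : Fin k → Fin m} {π : Equiv.Perm (Fin k)}

lemma pairProd_eq_one (hdiag : ∀ i, S i i = 1) (hπF : ∀ r, F (π r) = F r) :
    pairProd S F π = 1 :=
  Finset.prod_eq_one fun r _ => by rw [hπF, hdiag]

lemma exists_mem_pair_lt_apply (hπ : π ∈ PairPartitions k) (r : Fin k) :
    ∃ t ∈ ({r, π r} : Finset (Fin k)), t < π t := by
  obtain ⟨hinv, hne⟩ := mem_pairPartitions.1 hπ r
  rcases hne.lt_or_gt with h | h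
  · exact ⟨π r, by simp, by rwa [hinv]⟩
  · exact ⟨r, by simp, h⟩

lemma abs_pairProd_le_sq (hdiag : ∀ i, S i i = 1) {ε : ℝ} (hε : ε ≤ 1)
    (hoff : ∀ i j, i ≠ j → |S i j| ≤ ε) (hπ : π ∈ PairPartitions k) {r s : Fin k}
    (hr : F (π r) ≠ F r) (hs : F (π s) ≠ F s) (hsr : s ≠ r) (hsπr : s ≠ π r) :
    |pairProd S F π| ≤ ε ^ 2 := by
  have hinv : ∀ u, π (π u) = u := fun u => (mem_pairPartitions.1 hπ u).1
  have hcross : ∀ u, F (π u) ≠ F u →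
      ∀ t ∈ ({u, π u} : Finset (Fin k)), |S (F t) (F (π t))| ≤ ε := by
    intro u hu t ht
    refine hoff _ _ fun h => hu ?_
    rcases Finset.mem_insert.1 ht with rfl | ht
    · exact h.symm
    · rw [Finset.mem_singleton.1 ht, hinv] at h; exact h
  obtain ⟨t₁, hrt₁, ht₁⟩ := exists_mem_pair_lt_apply hπ r
  obtain ⟨t₂, hst₂, ht₂⟩ := exists_mem_pair_lt_apply hπ s
  have hne : t₁ ≠ t₂ := by
    simp only [Finset.mem_insert, Finset.mem_singleton] at hrt₁ hst₂
    rcases hrt₁ with rfl | rfl <;> rcases hst₂ with rfl | rfl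
    · exact hsr.symm
    · exact fun h => hsπr (by rw [h, hinv])
    · exact hsπr.symm
    · exact fun h => hsr (π.injective h).symm
  refine abs_prod_le_sq (fun t _ => ?_) (by simpa using ht₁) (by simpa using ht₂) hne
    (hcross r hr t₁ hrt₁) (hcross s hs t₂ hst₂)
  by_cases h : F t = F (π t)
  · rw [h, hdiag, abs_one]
  · exact (hoff _ _ h).trans hε

theorem abs_sum_pairProd_sub_card_le (hdiag : ∀ i, S i i = 1) {ε : ℝ} (hε : ε ≤ 1)
    (hoff : ∀ i j, i ≠ j → |S i j| ≤ ε) (hF : ∀ i, Even #{r | F r = i}) :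
    |∑ π ∈ PairPartitions k, pairProd S F π - #{π ∈ PairPartitions k | ∀ r, F (π r) = F r}| ≤
      #(PairPartitions k) * ε ^ 2 := by
  rw [← Finset.sum_filter_add_sum_filter_not _ (fun π : Equiv.Perm (Fin k) => ∀ r, F (π r) = F r),
    Finset.sum_congr rfl fun π hπ => pairProd_eq_one hdiag (Finset.mem_filter.1 hπ).2,
    Finset.sum_const, nsmul_one, add_sub_cancel_left]
  have hcrossing : ∀ π ∈ {π ∈ PairPartitions k | ¬ ∀ r, F (π r) = F r},
      |pairProd S F π| ≤ ε ^ 2 := by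
    intro π hπ
    obtain ⟨hπ, hπF⟩ := Finset.mem_filter.1 hπ
    obtain ⟨r, hr⟩ := not_forall.1 hπF
    obtain ⟨s, hsr, hs_ne, hs⟩ :=
      exists_ne_of_apply_ne hF (fun u => mem_pairPartitions.1 hπ u) hr
    exact abs_pairProd_le_sq hdiag hε hoff hπ hr hs hs_ne fun h => hr (h ▸ hsr)
  calc |∑ π ∈ PairPartitions k with ¬ ∀ r, F (π r) = F r, pairProd S F π|
      ≤ ∑ π ∈ PairPartitions k with ¬ ∀ r, F (π r) = F r, |pairProd S F π| :=
        Finset.abs_sum_le_sum_abs _ _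
    _ ≤ #{π ∈ PairPartitions k | ¬ ∀ r, F (π r) = F r} * ε ^ 2 := by
        simpa using Finset.sum_le_card_nsmul _ _ _ hcrossing
    _ ≤ #(PairPartitions k) * ε ^ 2 := by
        gcongr
        exact Finset.filter_subset _ _

end WickProduct

section FourfoldIndex

/-- Positions are `0`-based: `0, 1, 2, 3` form block `0` and `2j + 2, 2j + 3` form block `j`. -/
def block (r : ℕ) : ℕ := if r < 4 then 0 else (r - 2) / 2

/-- The partner of `r` in the block-preserving pairing that matches `0` with `a + 1`; the other two
positions of `{1, 2, 3}` sum to `5 - a`. -/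
def wickPartner (a : Fin 3) (r : ℕ) : ℕ :=
  if r < 4 then (if r = 0 then (a : ℕ) + 1 else if r = (a : ℕ) + 1 then 0 else 5 - a - r)
  else if r % 2 = 0 then r + 1 else r - 1

variable {z : ℕ}

lemma wickPartner_lt (hz : 0 < z) (a : Fin 3) {r : ℕ} (hr : r < 2 * z + 2) :
    wickPartner a r < 2 * z + 2 := by
  have := a.isLt; unfold wickPartner; grind

lemma wickPartner_wickPartner (a : Fin 3) (r : ℕ) : wickPartner a (wickPartner a r) = r := by
  have := a.isLt; unfold wickPartner; grind

lemma wickPartner_ne (a : Fin 3) (r : ℕ) : wickPartner a r ≠ r := by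
  have := a.isLt; unfold wickPartner; grind

lemma block_wickPartner (a : Fin 3) (r : ℕ) : block (wickPartner a r) = block r := by
  have := a.isLt; unfold block wickPartner; grind

def wickPairing (hz : 0 < z) (a : Fin 3) : Equiv.Perm (Fin (2 * z + 2)) :=
  Function.Involutive.toPerm (fun r => ⟨wickPartner a r, wickPartner_lt hz a r.isLt⟩)
    fun r => Fin.ext (wickPartner_wickPartner a r)

@[simp]
lemma wickPairing_apply_val (hz : 0 < z) (a : Fin 3) (r : Fin (2 * z + 2)) :
    (wickPairing hz a r : ℕ) = wickPartner a r :=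
  rfl

lemma wickPairing_mem_pairPartitions (hz : 0 < z) (a : Fin 3) :
    wickPairing hz a ∈ PairPartitions (2 * z + 2) :=
  mem_pairPartitions.2 fun r =>
    ⟨Fin.ext (wickPartner_wickPartner a r), fun h => wickPartner_ne a r (congrArg Fin.val h)⟩

lemma wickPairing_injective (hz : 0 < z) : Function.Injective (wickPairing hz) := by
  intro a b h
  have h0 := congrArg (fun π : Equiv.Perm (Fin (2 * z + 2)) => (π ⟨0, by omega⟩ : ℕ)) h
  simpa [wickPartner, Fin.val_inj] using h0

/-- Off block `0` a block-preserving pairing has no choice; on `{0, 1, 2, 3}` it is determined by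
the partner of `0`. -/
lemma eq_wickPairing_of_block_eq (hz : 0 < z) {π : Equiv.Perm (Fin (2 * z + 2))}
    (hπ : π ∈ PairPartitions (2 * z + 2)) (hblock : ∀ r, block (π r) = block r) :
    ∃ a, π = wickPairing hz a := by
  have hinv : ∀ r, π (π r) = r := fun r => (mem_pairPartitions.1 hπ r).1
  have hne : ∀ r, (π r : ℕ) ≠ r := fun r h => (mem_pairPartitions.1 hπ r).2 (Fin.ext h)
  let o : Fin (2 * z + 2) := ⟨0, by omega⟩
  have ho0 : (o : ℕ) = 0 := rfl
  have ho : (π o : ℕ) < 4 ∧ (π o : ℕ) ≠ 0 := by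
    have h := hblock o
    have := hne o
    unfold block at h
    grind
  refine ⟨⟨(π o : ℕ) - 1, by omega⟩, Equiv.ext fun r => Fin.ext ?_⟩
  rw [wickPairing_apply_val]
  unfold wickPartner
  rcases eq_or_ne r o with rfl | hro
  · grind
  rcases eq_or_ne r (π o) with rfl | hrπo
  · rw [hinv]; grind
  have h1 : (π r : ℕ) ≠ 0 := fun h => hrπo (by rw [← hinv r]; congr 1; exact Fin.ext h)
  have h2 : (π r : ℕ) ≠ π o := fun h => hro (π.injective (Fin.ext h))
  have h3 : (r : ℕ) ≠ 0 := fun h => hro (Fin.ext h)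
  have h4 : (r : ℕ) ≠ π o := fun h => hrπo (Fin.ext h)
  have hr := hblock r
  have := hne r
  unfold block at hr
  grind

lemma filter_block_eq_image_wickPairing (hz : 0 < z) :
    {π ∈ PairPartitions (2 * z + 2) | ∀ r : Fin (2 * z + 2), block (π r) = block r} =
      Finset.univ.image (wickPairing hz) := by
  ext π
  simp only [Finset.mem_filter, Finset.mem_image, Finset.mem_univ, true_and]
  constructor
  · rintro ⟨hπ, hblock⟩
    obtain ⟨a, rfl⟩ := eq_wickPairing_of_block_eq hz hπ hblock
    exact ⟨a, rfl⟩
  · rintro ⟨a, rfl⟩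
    exact ⟨wickPairing_mem_pairPartitions hz a, fun r => block_wickPartner a r⟩

variable {β : Type*} [DecidableEq β] {F : Fin (2 * z + 2) → β}

lemma card_filter_pairPartitions_of_eq_iff_block (hz : 0 < z)
    (hF : ∀ r s, F r = F s ↔ block r = block s) :
    #{π ∈ PairPartitions (2 * z + 2) | ∀ r, F (π r) = F r} = 3 := by
  simp only [hF]
  rw [filter_block_eq_image_wickPairing hz, Finset.card_image_of_injective _
    (wickPairing_injective hz), Finset.card_univ, Fintype.card_fin]

lemma even_card_fiber_of_eq_iff_block (hz : 0 < z)
    (hF : ∀ r s, F r = F s ↔ block r = block s) (b : β) : Even #{r | F r = b} :=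
  even_card_fiber_of_involution (wickPairing hz 0)
    (mem_pairPartitions.1 (wickPairing_mem_pairPartitions hz 0))
    (fun r => (hF _ _).2 (block_wickPartner 0 r)) b

end FourfoldIndex

lemma sq_div_two_le_Δn (n : ℕ) : (n : ℝ) ^ 2 / 2 ≤ Δn n := by
  have h : 2 * Δn n = n * (n + 1) := Nat.mul_div_cancel' (Nat.even_mul_succ_self n).two_dvd
  have h' : (2 : ℝ) * Δn n = n * (n + 1) := by exact_mod_cast h
  nlinarith [(n.cast_nonneg : (0 : ℝ) ≤ n)]

lemma one_div_rpow_Δn_sq_le {α : ℝ} (hα : 0 ≤ α) {n : ℕ} (hn : 0 < n) :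
    (1 / (Δn n : ℝ) ^ α) ^ 2 ≤ 1 / ((n : ℝ) / √2) ^ (4 * α) := by
  have hb : 0 ≤ (n : ℝ) / √2 := by positivity
  have hpow : ((n : ℝ) / √2) ^ (4 * α) = (((n : ℝ) ^ 2 / 2) ^ 2) ^ α := by
    have hsqrt : (√2 : ℝ) ^ 4 = 2 ^ 2 := by
      rw [show 4 = 2 * 2 from rfl, pow_mul, Real.sq_sqrt zero_le_two]
    rw [Real.rpow_mul hb, show (4 : ℝ) = (4 : ℕ) by norm_num, Real.rpow_natCast, div_pow, hsqrt]
    congr 1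
    ring
  rw [one_div_pow, Real.rpow_pow_comm (Nat.cast_nonneg _), hpow]
  gcongr
  exact sq_div_two_le_Δn n

/-- Wick-sum bound for tuples with one index of multiplicity four and
`z − 1` distinct doubled indices: the sum is close to `3`. -/
theorem stmt11 (α : ℝ) (hα : 0 < α) (S : ∀ n, Matrix (Fin n) (Fin n) ℝ)
    (hS : CovMatSeq α S)
    (n z : ℕ) (hz : 0 < z)
    (i0 : Fin z → Fin (Δn n)) (hinj : Function.Injective i0) :
    |(∑ π ∈ PairPartitions (2 * z + 2),
        pairProd (S (Δn n))
          (fun r : Fin (2 * z + 2) =>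
            if (r : ℕ) < 4 then i0 ⟨0, hz⟩
            else i0 ⟨((r : ℕ) - 2) / 2, by have hr := r.isLt; omega⟩) π) - 3| ≤
      ((PairPartitions (2 * z + 2)).card : ℝ) / ((n : ℝ) / Real.sqrt 2) ^ (4 * α) := by
  obtain ⟨-, -, hdiag, hoff⟩ := hS (Δn n)
  have hm : 0 < Δn n := (i0 ⟨0, hz⟩).pos
  have hn : 0 < n := Nat.pos_of_ne_zero fun h => by simp [h, Δn] at hm
  have hε : 1 / (Δn n : ℝ) ^ α ≤ 1 :=
    div_le_one_of_le₀ (Real.one_le_rpow (by exact_mod_cast hm) hα.le) (by positivity)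
  set F : Fin (2 * z + 2) → Fin (Δn n) := fun r =>
    if (r : ℕ) < 4 then i0 ⟨0, hz⟩ else i0 ⟨((r : ℕ) - 2) / 2, by have hr := r.isLt; omega⟩
  have hF : ∀ r s, F r = F s ↔ block r = block s := by
    intro r s
    simp only [F, block]
    split_ifs <;> simp [hinj.eq_iff]
  have hwick := abs_sum_pairProd_sub_card_le hdiag hε hoff (even_card_fiber_of_eq_iff_block hz hF)
  rw [card_filter_pairPartitions_of_eq_iff_block hz hF, Nat.cast_ofNat] at hwick
  exact hwick.trans ((mul_le_mul_of_nonneg_left (one_div_rpow_Δn_sq_le hα.le hn)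
    (Nat.cast_nonneg _)).trans_eq (mul_one_div _ _))

end RMT
end
end

section
/- Let b = (b_n)_n be a sequence of n-bandwidths, let k, n ∈ ℕ and l ∈ {1,…,k}. Then the number of b_n-relevant tuples t ∈ [n]^k_b whose multigraph has at most l distinct vertices satisfies #{t ∈ [n]^k_b : #V_t ≤ l} ≤ k^k · n · b_n^{l−1}. -/
open MeasureTheory ProbabilityTheory Filter Finset
open scoped BigOperators ENNReal NNReal Classical

noncomputable section

namespace RMT

variable {Ω : Type} [MeasurableSpace Ω]

/-! Each tuple is determined by its pattern of repeated entries, its first entry, and, at every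
position where a new vertex appears, which of the at most `b_n` neighbours of the previous vertex
it is. There are at most `k ^ k` patterns, which is where that factor comes from. -/

lemma exists_injOn_lt_card {α : Type*} (s : Finset α) :
    ∃ f : α → ℕ, Set.InjOn f s ∧ ∀ y ∈ s, f y < s.card := by
  refine ⟨fun y => if h : y ∈ s then (s.equivFin ⟨y, h⟩ : ℕ) else 0, ?_, ?_⟩
  · intro y hy y' hy' h
    simp only [Finset.mem_coe] at hy hy'
    simp only [hy, hy', dite_true] at h
    simpa using s.equivFin.injective (Fin.ext h)
  · intro y hy
    simp [hy]

section FirstIndex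

variable {α : Type*} [DecidableEq α] {k : ℕ}

def firstIndex (t : Fin k → α) (i : Fin k) : Fin k :=
  (univ.filter fun j => t j = t i).min' ⟨i, by simp⟩

lemma firstIndex_le (t : Fin k → α) (i : Fin k) : firstIndex t i ≤ i :=
  min'_le _ _ (by simp)

lemma apply_firstIndex (t : Fin k → α) (i : Fin k) : t (firstIndex t i) = t i :=
  (mem_filter.mp (min'_mem (univ.filter fun j => t j = t i) _)).2

lemma firstIndex_congr {t : Fin k → α} {i j : Fin k} (h : t i = t j) :
    firstIndex t i = firstIndex t j := by
  simp only [firstIndex, h]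

lemma card_image_eq_card_filter_firstIndex_eq (t : Fin k → α) :
    (univ.image t).card = (univ.filter fun i => firstIndex t i = i).card := by
  have hinj : Set.InjOn t (univ.filter fun i => firstIndex t i = i) := by
    intro i hi j hj h
    simp only [coe_filter, mem_univ, true_and, Set.mem_ofPred_eq] at hi hj
    rw [← hi, ← hj, firstIndex_congr h]
  rw [← card_image_of_injOn hinj]
  congr 1
  ext v
  simp only [mem_image, mem_filter, mem_univ, true_and]
  constructor
  · rintro ⟨i, rfl⟩
    exact ⟨firstIndex t i, firstIndex_congr (apply_firstIndex t i), apply_firstIndex t i⟩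
  · rintro ⟨i, -, rfl⟩
    exact ⟨i, rfl⟩

lemma card_image_eq_card_filter_firstIndex_succ_add_one (t : Fin (k + 1) → α) :
    (univ.image t).card = (univ.filter fun i : Fin k => firstIndex t i.succ = i.succ).card + 1 := by
  have h0 : firstIndex t 0 = 0 := Fin.le_zero_iff.mp (firstIndex_le t 0)
  rw [card_image_eq_card_filter_firstIndex_eq, Fin.card_filter_univ_succ, if_pos h0]

end FirstIndex

section Walks

variable {α : Type*} {k : ℕ}

def IsWalkIn (U : Finset α) (R : α → α → Prop) (t : Fin (k + 1) → α) : Prop :=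
  (∀ i, t i ∈ U) ∧ ∀ i : Fin k, R (t i.castSucc) (t i.succ)

variable [DecidableEq α] {U : Finset α} {R : α → α → Prop} {d : ℕ}
  {W : Finset (Fin (k + 1) → α)}

def stepCode (c : α → α → ℕ) (t : Fin (k + 1) → α) (i : Fin k) : ℕ :=
  if firstIndex t i.succ = i.succ then c (t i.castSucc) (t i.succ) else 0

lemma eq_of_stepCode_eq {c : α → α → ℕ} (hc : ∀ x ∈ U, Set.InjOn (c x) (U.filter (R x)))
    {t t' : Fin (k + 1) → α} (ht : IsWalkIn U R t) (ht' : IsWalkIn U R t')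
    (hpat : firstIndex t = firstIndex t') (h0 : t 0 = t' 0)
    (hcode : stepCode c t = stepCode c t') : t = t' := by
  funext i
  induction i using WellFoundedLT.induction with
  | ind i ih =>
    cases i using Fin.cases with
    | zero => exact h0
    | succ j =>
      have hprev : t j.castSucc = t' j.castSucc := ih _ Fin.castSucc_lt_succ
      by_cases hnew : firstIndex t j.succ = j.succ
      · have hnew' : firstIndex t' j.succ = j.succ := hpat ▸ hnew
        have hcj := congrFun hcode j
        simp only [stepCode, hnew, hnew', if_true, hprev] at hcj
        exact hc _ (ht'.1 _) (by simpa [hprev] using And.intro (ht.1 j.succ) (ht.2 j))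
          (by simpa using And.intro (ht'.1 j.succ) (ht'.2 j)) hcj
      · have hlt : firstIndex t j.succ < j.succ := lt_of_le_of_ne (firstIndex_le t _) hnew
        calc t j.succ = t (firstIndex t j.succ) := (apply_firstIndex t _).symm
          _ = t' (firstIndex t j.succ) := ih _ hlt
          _ = t' (firstIndex t' j.succ) := by rw [hpat]
          _ = t' j.succ := apply_firstIndex t' _

lemma card_filter_firstIndex_eq_le (hd : ∀ x ∈ U, (U.filter (R x)).card ≤ d)
    (hW : ∀ t ∈ W, IsWalkIn U R t) (σ : Fin (k + 1) → Fin (k + 1)) :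
    (W.filter fun t => firstIndex t = σ).card ≤
      U.card * d ^ (univ.filter fun i : Fin k => σ i.succ = i.succ).card := by
  choose c hc_inj hc_lt using fun x => exists_injOn_lt_card (U.filter (R x))
  let codes : Finset (Fin k → ℕ) :=
    Fintype.piFinset fun i => if σ i.succ = i.succ then range d else {0}
  have hmaps : ∀ t ∈ W.filter (fun t => firstIndex t = σ),
      (t 0, stepCode c t) ∈ U ×ˢ codes := by
    intro t ht
    obtain ⟨htW, rfl⟩ := mem_filter.mp ht
    refine mem_product.mpr ⟨(hW t htW).1 0, Fintype.mem_piFinset.mpr fun i => ?_⟩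
    by_cases hnew : firstIndex t i.succ = i.succ
    · have hy : t i.succ ∈ U.filter (R (t i.castSucc)) :=
        mem_filter.mpr ⟨(hW t htW).1 _, (hW t htW).2 i⟩
      simpa [stepCode, hnew] using (hc_lt _ _ hy).trans_le (hd _ ((hW t htW).1 _))
    · simp [stepCode, hnew]
  calc (W.filter fun t => firstIndex t = σ).card ≤ (U ×ˢ codes).card := by
        refine card_le_card_of_injOn (fun t => (t 0, stepCode c t)) hmaps ?_
        intro t ht t' ht' h
        obtain ⟨htW, hσ⟩ := mem_filter.mp ht
        obtain ⟨ht'W, hσ'⟩ := mem_filter.mp ht'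
        exact eq_of_stepCode_eq (fun x _ => hc_inj x) (hW t htW) (hW t' ht'W)
          (hσ.trans hσ'.symm) (Prod.ext_iff.mp h).1 (Prod.ext_iff.mp h).2
    _ = U.card * d ^ (univ.filter fun i : Fin k => σ i.succ = i.succ).card := by
        simp [codes, Fintype.card_piFinset, apply_ite, prod_ite]

theorem card_filter_card_image_le (hd1 : 1 ≤ d) (hd : ∀ x ∈ U, (U.filter (R x)).card ≤ d)
    (hW : ∀ t ∈ W, IsWalkIn U R t) (l : ℕ) :
    (W.filter fun t => (univ.image t).card ≤ l).card ≤
      (k + 1) ^ (k + 1) * (U.card * d ^ (l - 1)) := by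
  set Wl := W.filter fun t => (univ.image t).card ≤ l
  have hfibre : ∀ σ : Fin (k + 1) → Fin (k + 1),
      (Wl.filter fun t => firstIndex t = σ).card ≤ U.card * d ^ (l - 1) := by
    intro σ
    rcases (Wl.filter fun t => firstIndex t = σ).eq_empty_or_nonempty with he | ⟨t, ht⟩
    · simp [he]
    obtain ⟨htWl, rfl⟩ := mem_filter.mp ht
    have hl := (mem_filter.mp htWl).2
    rw [card_image_eq_card_filter_firstIndex_succ_add_one] at hl
    refine (card_filter_firstIndex_eq_le hd (fun t ht => hW t (filter_subset _ _ ht)) _).trans ?_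
    exact Nat.mul_le_mul_left _ (Nat.pow_le_pow_right hd1 (by omega))
  calc Wl.card
        = ∑ σ : Fin (k + 1) → Fin (k + 1), (Wl.filter fun t => firstIndex t = σ).card :=
          card_eq_sum_card_fiberwise fun _ _ => mem_univ _
    _ ≤ ∑ _σ : Fin (k + 1) → Fin (k + 1), U.card * d ^ (l - 1) :=
          sum_le_sum fun σ _ => hfibre σ
    _ = (k + 1) ^ (k + 1) * (U.card * d ^ (l - 1)) := by simp

end Walks

/-- The representative in `{1, …, n}` of `z` modulo `n`. -/
def wrap (n : ℕ) (z : ℤ) : ℕ := ((z - 1) % n + 1).toNat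

lemma wrap_add_mul {n y : ℕ} (hy : y ∈ Icc 1 n) (c : ℤ) : wrap n (y + n * c) = y := by
  rw [mem_Icc] at hy
  rw [wrap, show (y : ℤ) + n * c - 1 = (y - 1) + n * c by ring, Int.add_mul_emod_self_left,
    Int.emod_eq_of_lt (by omega) (by omega)]
  omega

lemma card_filter_bRelevant_le {n bn x : ℕ} (hb : IsBandwidth n bn) (hx : x ∈ Icc 1 n) :
    ((Icc 1 n).filter (BRelevant n bn x)).card ≤ bn := by
  rcases hb with ⟨hlt, h, rfl⟩ | rfl
  · have hsub : (Icc 1 n).filter (BRelevant n (2 * h + 1) x) ⊆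
        (Icc (-h : ℤ) h).image fun z => wrap n (x + z) := by
      intro y hy
      obtain ⟨hyU, hrel⟩ := mem_filter.mp hy
      have hne : 2 * h + 1 ≠ n := by omega
      have hhalf : (2 * h + 1 - 1) / 2 = h := by omega
      rw [BRelevant, hhalf] at hrel
      rw [mem_Icc] at hx hyU
      -- the offset `y - x` is shifted by a multiple of `n` into `[-h, h]`
      obtain ⟨c, hc⟩ : ∃ c : ℤ, |(y : ℤ) - x + n * c| ≤ h := by
        rcases hrel.resolve_left hne with hrel | hrel <;>
          rcases abs_cases ((x : ℤ) - y) with ⟨he, _⟩ | ⟨he, _⟩ <;> rw [he] at hrel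
        · exact ⟨0, abs_le.mpr ⟨by omega, by omega⟩⟩
        · exact ⟨0, abs_le.mpr ⟨by omega, by omega⟩⟩
        · exact ⟨1, abs_le.mpr ⟨by omega, by omega⟩⟩
        · exact ⟨-1, abs_le.mpr ⟨by omega, by omega⟩⟩
      refine mem_image.mpr ⟨_, mem_Icc.mpr (abs_le.mp hc), ?_⟩
      rw [show (x : ℤ) + (y - x + n * c) = y + n * c by ring,
        wrap_add_mul (mem_Icc.mpr hyU)]
    refine (card_le_card hsub).trans (card_image_le.trans ?_)
    rw [Int.card_Icc]
    omega
  · simpa using card_filter_le (Icc 1 bn) (BRelevant bn bn x)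

lemma cyc_castSucc {k : ℕ} (i : Fin k) : cyc i.castSucc = i.succ :=
  Fin.ext (Nat.mod_eq_of_lt (by simp))

theorem stmt15_general (b : ℕ → ℕ) (hband : ∀ m, 1 ≤ m → IsBandwidth m (b m))
    (k n : ℕ) (hk : 0 < k) (hn : 0 < n) (l : ℕ) :
    ((relTuples n (b n) k).filter fun t => (verts t).card ≤ l).card ≤
      k ^ k * (n * b n ^ (l - 1)) := by
  obtain ⟨k, rfl⟩ := Nat.exists_eq_add_one.mpr hk
  have hb := hband n hn
  have hb1 : 1 ≤ b n := by
    rcases hb with ⟨-, hodd⟩ | h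
    · exact hodd.pos
    · omega
  have hwalk : ∀ t ∈ relTuples n (b n) (k + 1), IsWalkIn (Icc 1 n) (BRelevant n (b n)) t := by
    intro t ht
    obtain ⟨hU, hrel⟩ := mem_filter.mp ht
    exact ⟨Fintype.mem_piFinset.mp hU, fun i => cyc_castSucc i ▸ hrel i.castSucc⟩
  have := card_filter_card_image_le hb1 (fun x hx => card_filter_bRelevant_le hb hx) hwalk l
  rwa [Nat.card_Icc, Nat.add_sub_cancel] at this

/-- Counting `b_n`-relevant tuples with at most `l` distinct
vertices. -/
theorem stmt15 (b : ℕ → ℕ) (hband : ∀ m, 1 ≤ m → IsBandwidth m (b m))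
    (k n : ℕ) (hk : 0 < k) (hn : 0 < n) (l : ℕ) (hl : l ∈ Finset.Icc 1 k) :
    ((relTuples n (b n) k).filter fun t => (verts t).card ≤ l).card ≤
      k ^ k * (n * b n ^ (l - 1)) :=
  stmt15_general b hband k n hk hn l

end RMT
end
end
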